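/- Let V = R^n and let the Hecke algebra H_m act on V^{⊗m} by v_i T_k = q^{-1} v_i if i_k = i_{k+1}; v_{i·s_k} if i_k < i_{k+1}; and v_{i·s_k} + (q^{-1}−q) v_i if i_k > i_{k+1}. Then this assignment satisfies the Hecke algebra relations, i.e., it defines a right H_m-module structure on V^{⊗m}. -/

import Mathlib

namespace HeckeActionOnTensorSpace

variable {R : Type*} [CommRing R] (q : Rˣ) (m n : ℕ)

/-- Tensor space `V^{⊗m}` for `V = R^n`, modelled on its basis of multi-indices. -/
abbrev TensorSpace (R : Type*) [CommRing R] (m n : ℕ) := (Fin m → Fin n) → R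

/-- The matrix (rows and columns indexed by multi-indices) of the right action of the
Hecke algebra generator `T_k`:
`v_i T_k = q⁻¹ v_i` if `i_k = i_{k+1}`, `v_{i·s_k}` if `i_k < i_{k+1}`, and
`v_{i·s_k} + (q⁻¹ − q) v_i` if `i_k > i_{k+1}`;  entry `(a, b)` is the coefficient of
`v_b` in `v_a T_k`. -/
def heckeMatrix (k : ℕ) (hk : k + 1 < m) :
    Matrix (Fin m → Fin n) (Fin m → Fin n) R :=
  fun a b =>
    let kk : Fin m := ⟨k, by omega⟩
    let kk1 : Fin m := ⟨k + 1, hk⟩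
    if a kk = a kk1 then (if b = a then ((q⁻¹ : Rˣ) : R) else 0)
    else if a kk < a kk1 then (if b = a ∘ Equiv.swap kk kk1 then 1 else 0)
    else (if b = a ∘ Equiv.swap kk kk1 then 1 else 0) +
      (if b = a then ((q⁻¹ : Rˣ) : R) - ((q : Rˣ) : R) else 0)

/-- The endomorphism of tensor space given by the right action of `T_k` (transposed matrix,
acting on coordinate vectors). -/
noncomputable def heckeOp (k : ℕ) (hk : k + 1 < m) :
    Module.End R (TensorSpace R m n) :=
  Matrix.toLin' (heckeMatrix q m n k hk).transpose

/-!
`T_k` only looks at the tensor factors `k` and `k + 1`, so it is the instance at the positions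
`(k, k + 1)` of an operator `T_{ij}` that makes sense for any two positions `i, j` of multi-indices
with values in any linear order. All relations are then identities between coordinates: the
coordinate `b` of `v T_{ij}` only involves `v` at `b` and at `b ∘ (i j)`. The quadratic relation is
a three-case check on the order of `b i` and `b j`; distant generators commute because disjoint
transpositions do; and the braid relation is checked according to the relative order of `b i`,
`b j`, `b l`, after identifying the permutations `(i j)(j l)(i j) = (j l)(i j)(j l)`.
-/

section Swap

variable {ι β : Type*} [DecidableEq ι]

@[simp]
theorem comp_swap_comp_swap (b : ι → β) (i j : ι) :
    (b ∘ Equiv.swap i j) ∘ Equiv.swap i j = b := by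
  rw [Function.comp_assoc, ← Equiv.Perm.coe_mul, Equiv.swap_mul_self, Equiv.Perm.coe_one,
    Function.comp_id]

theorem comp_swap_eq_self_iff {b : ι → β} {i j : ι} : b ∘ Equiv.swap i j = b ↔ b i = b j :=
  ⟨fun h => by simpa using (congrFun h i).symm, fun h => by simp [Equiv.comp_swap_eq_update, h]⟩

theorem eq_comp_swap_comm {a b : ι → β} {i j : ι} :
    a = b ∘ Equiv.swap i j ↔ b = a ∘ Equiv.swap i j := by
  constructor <;> rintro rfl <;> simp

theorem comp_swap_comm_of_disjoint (b : ι → β) {i j k l : ι}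
    (hik : i ≠ k) (hil : i ≠ l) (hjk : j ≠ k) (hjl : j ≠ l) :
    (b ∘ Equiv.swap k l) ∘ Equiv.swap i j = (b ∘ Equiv.swap i j) ∘ Equiv.swap k l := by
  rw [Function.comp_assoc, Function.comp_assoc, ← Equiv.Perm.coe_mul, ← Equiv.Perm.coe_mul,
    Equiv.mul_swap_eq_swap_mul, Equiv.swap_apply_of_ne_of_ne hik hil,
    Equiv.swap_apply_of_ne_of_ne hjk hjl]

theorem comp_swap_braid (b : ι → β) {i j l : ι} (hij : i ≠ j) (hil : i ≠ l) (hjl : j ≠ l) :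
    ((b ∘ Equiv.swap i j) ∘ Equiv.swap j l) ∘ Equiv.swap i j =
      ((b ∘ Equiv.swap j l) ∘ Equiv.swap i j) ∘ Equiv.swap j l := by
  simp only [Function.comp_assoc, ← Equiv.Perm.coe_mul]
  rw [Equiv.swap_mul_swap_mul_swap hij hil, Equiv.swap_comm j l, Equiv.swap_comm i j,
    Equiv.swap_mul_swap_mul_swap hjl.symm hil.symm, Equiv.swap_comm l i]

end Swap

section HeckeOpAt

variable {ι α : Type*} [DecidableEq ι] [LinearOrder α]

def heckeOpAt (i j : ι) : Module.End R ((ι → α) → R) where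
  toFun v b :=
    if b i = b j then ((q⁻¹ : Rˣ) : R) * v b
    else if b i < b j then v (b ∘ Equiv.swap i j)
    else v (b ∘ Equiv.swap i j) + (((q⁻¹ : Rˣ) : R) - q) * v b
  map_add' v w := by ext b; dsimp only [Pi.add_apply]; split_ifs <;> ring
  map_smul' c v := by
    ext b; dsimp only [Pi.smul_apply, smul_eq_mul, RingHom.id_apply]; split_ifs <;> ring

theorem heckeOpAt_apply (i j : ι) (v : (ι → α) → R) (b : ι → α) :
    heckeOpAt q i j v b =
      if b i = b j then ((q⁻¹ : Rˣ) : R) * v b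
      else if b i < b j then v (b ∘ Equiv.swap i j)
      else v (b ∘ Equiv.swap i j) + (((q⁻¹ : Rˣ) : R) - q) * v b := rfl

theorem heckeOpAt_single_apply [DecidableEq (ι → α)] {i j : ι} (a b : ι → α) :
    heckeOpAt q i j (Pi.single b 1) a =
      if b i = b j then (if a = b then ((q⁻¹ : Rˣ) : R) else 0)
      else if b i < b j then (if a = b ∘ Equiv.swap i j then 1 else 0)
      else (if a = b ∘ Equiv.swap i j then 1 else 0) +
        (if a = b then ((q⁻¹ : Rˣ) : R) - q else 0) := by
  rw [heckeOpAt_apply]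
  by_cases hab : a = b
  · subst hab
    by_cases h : a i = a j
    · simp [h]
    · have hs := mt comp_swap_eq_self_iff.mp h
      simp [h, hs, Ne.symm hs]
  by_cases has : a = b ∘ Equiv.swap i j
  · subst has
    have h : b i ≠ b j := mt comp_swap_eq_self_iff.mpr hab
    simp [h, Ne.symm h, hab]
  · simp [hab, has, mt eq_comp_swap_comm.mpr has]

theorem heckeOpAt_mul_self (i j : ι) :
    heckeOpAt q i j * heckeOpAt q i j (α := α) =
      (((q⁻¹ : Rˣ) : R) - q) • heckeOpAt q i j + 1 := by
  ext v b
  simp only [Module.End.mul_apply, LinearMap.add_apply, LinearMap.smul_apply,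
    Module.End.one_apply, Pi.add_apply, Pi.smul_apply, smul_eq_mul, heckeOpAt_apply,
    Function.comp_apply, Equiv.swap_apply_left, Equiv.swap_apply_right, comp_swap_comp_swap]
  rcases lt_trichotomy (b i) (b j) with h | h | h
  · simp only [h, h.ne, h.ne', not_lt_of_gt h, ↓reduceIte]
    ring
  · simp only [h, ↓reduceIte]
    linear_combination v b * q.mul_inv
  · simp only [h, h.ne, h.ne', not_lt_of_gt h, ↓reduceIte]
    ring

theorem heckeOpAt_commute {i j k l : ι} (hik : i ≠ k) (hil : i ≠ l) (hjk : j ≠ k)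
    (hjl : j ≠ l) : Commute (heckeOpAt q i j) (heckeOpAt q k l (α := α)) := by
  ext v b
  simp only [Module.End.mul_apply, heckeOpAt_apply, Function.comp_apply,
    Equiv.swap_apply_of_ne_of_ne hik hil, Equiv.swap_apply_of_ne_of_ne hjk hjl,
    Equiv.swap_apply_of_ne_of_ne hik.symm hjk.symm, Equiv.swap_apply_of_ne_of_ne hil.symm hjl.symm,
    comp_swap_comm_of_disjoint b hik hil hjk hjl]
  split_ifs <;> ring

theorem heckeOpAt_braid {i j l : ι} (hij : i ≠ j) (hil : i ≠ l) (hjl : j ≠ l) :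
    heckeOpAt q i j * heckeOpAt q j l * heckeOpAt q i j (α := α) =
      heckeOpAt q j l * heckeOpAt q i j * heckeOpAt q j l := by
  ext v b
  simp only [Module.End.mul_apply, heckeOpAt_apply, Function.comp_apply,
    Equiv.swap_apply_left, Equiv.swap_apply_right, comp_swap_comp_swap,
    Equiv.swap_apply_of_ne_of_ne hil.symm hjl.symm, Equiv.swap_apply_of_ne_of_ne hij hil,
    comp_swap_braid b hij hil hjl]
  rcases lt_trichotomy (b i) (b j) with h₁ | h₁ | h₁ <;>
  rcases lt_trichotomy (b j) (b l) with h₂ | h₂ | h₂ <;>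
  rcases lt_trichotomy (b i) (b l) with h₃ | h₃ | h₃ <;>
  first
  | (exfalso; order)
  -- only the orderings `b l < b i = b j` and `b j = b l < b i` need `q * q⁻¹ = 1`
  | (simp only [h₁, h₂, h₃, ne_of_gt, ne_of_lt, not_lt_of_gt, ↓reduceIte] <;>
     first
     | ring1
     | linear_combination ((((q⁻¹ : Rˣ) : R) - q) * v b) * q.mul_inv
     | linear_combination (-(((q⁻¹ : Rˣ) : R) - q) * v b) * q.mul_inv)

end HeckeOpAt

theorem add_smul_one_mul_sub_smul_one_eq_zero {A : Type*} [Ring A] [Algebra R A] {t : A}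
    (h : t * t = (((q⁻¹ : Rˣ) : R) - q) • t + 1) :
    (t + (q : R) • 1) * (t - ((q⁻¹ : Rˣ) : R) • 1) = 0 := by
  rw [add_mul, mul_sub, mul_sub, h]
  simp only [smul_mul_assoc, mul_smul_comm, one_mul, mul_one, smul_smul, Units.inv_mul, one_smul]
  module

theorem heckeOp_eq_heckeOpAt (k : ℕ) (hk : k + 1 < m) :
    heckeOp q m n k hk = heckeOpAt q ⟨k, by omega⟩ ⟨k + 1, hk⟩ := by
  rw [heckeOp, ← Matrix.toLin'_toMatrix' (heckeOpAt q _ _)]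
  congr 1
  ext a b
  rw [LinearMap.toMatrix'_apply, heckeOpAt_single_apply, Matrix.transpose_apply]
  rfl

theorem hecke_relations_hold :
    (∀ k (hk : k + 1 < m),
      (heckeOp q m n k hk + (q : R) • (1 : Module.End R (TensorSpace R m n))) *
        (heckeOp q m n k hk - ((q⁻¹ : Rˣ) : R) • 1) = 0) ∧
    (∀ k (hk : k + 2 < m),
      heckeOp q m n k (by omega) * heckeOp q m n (k + 1) hk * heckeOp q m n k (by omega) =
      heckeOp q m n (k + 1) hk * heckeOp q m n k (by omega) * heckeOp q m n (k + 1) hk) ∧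
    (∀ k j (hk : k + 1 < m) (hj : j + 1 < m), k + 2 ≤ j →
      heckeOp q m n k hk * heckeOp q m n j hj = heckeOp q m n j hj * heckeOp q m n k hk) := by
  have mk_ne {a b : ℕ} {ha : a < m} {hb : b < m} (h : a ≠ b) : (⟨a, ha⟩ : Fin m) ≠ ⟨b, hb⟩ :=
    Fin.ne_of_val_ne h
  refine ⟨fun k hk => ?_, fun k hk => ?_, fun k j hk hj hkj => ?_⟩
  · rw [heckeOp_eq_heckeOpAt]
    exact add_smul_one_mul_sub_smul_one_eq_zero q (heckeOpAt_mul_self q _ _)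
  · simp only [heckeOp_eq_heckeOpAt]
    exact heckeOpAt_braid q (mk_ne (by omega)) (mk_ne (by omega)) (mk_ne (by omega))
  · simp only [heckeOp_eq_heckeOpAt]
    exact (heckeOpAt_commute q (mk_ne (by omega)) (mk_ne (by omega)) (mk_ne (by omega))
      (mk_ne (by omega))).eq

end HeckeActionOnTensorSpace
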